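/- arXiv:0804.3693 — 5 statements merged into one kernel-verified Lean document; each statement's English description precedes it below -/
import Mathlib

section
/- Suppose a: I → (0,∞) is C², ρ, p: I → ℝ are C¹, satisfying the evolution equation a''/a = -(4π/3)(ρ+3p) + (8π/3)[f(ρ) - (3/2)(ρ+p) f'(ρ)] and the conservation law ρ' + 3(a'/a)(ρ+p) = 0, where f is C¹. If the modified Friedmann equation (a'/a)² = (8π/3)(ρ + f(ρ)) - k/a² holds at some time t₀ ∈ I, then it holds for all t ∈ I. -/
open Real Set

/-!
Multiplying the modified Friedmann equation by `a²` gives the quantity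
`a'² - (8π/3)(ρ + f ρ) a² + k`. Differentiating it and substituting `a''` from the evolution
equation and `ρ'` from the conservation law, every term cancels, so it is constant on the
interval; it vanishes at `t₀`, hence everywhere.
-/

theorem Set.OrdConnected.apply_eq_of_hasDerivAt_zero {F : Type*} [NormedAddCommGroup F]
    [NormedSpace ℝ F] {s : Set ℝ} (hs : s.OrdConnected) {g : ℝ → F}
    (hg : ∀ t ∈ s, HasDerivAt g 0 t) {x y : ℝ} (hx : x ∈ s) (hy : y ∈ s) : g y = g x := by
  have h := hs.convex.norm_image_sub_le_of_norm_hasDerivWithin_le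
    (fun t ht => (hg t ht).hasDerivWithinAt) (fun _ _ => norm_zero.le) hx hy
  rw [zero_mul, norm_le_zero_iff, sub_eq_zero] at h
  exact h

/-- The Friedmann constraint multiplied through by `a²`, so that it involves no division. -/
noncomputable def hamiltonianConstraint (k : ℝ) (f : ℝ → ℝ) (a ρ a' : ℝ → ℝ) (t : ℝ) : ℝ :=
  a' t ^ 2 - (8 * π / 3) * (ρ t + f (ρ t)) * a t ^ 2 + k

theorem friedmann_iff_hamiltonianConstraint_eq_zero {k : ℝ} {f : ℝ → ℝ}
    {a ρ a' : ℝ → ℝ} {t : ℝ} (ht : a t ≠ 0) :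
    (a' t / a t) ^ 2 = (8 * π / 3) * (ρ t + f (ρ t)) - k / a t ^ 2 ↔
      hamiltonianConstraint k f a ρ a' t = 0 := by
  rw [hamiltonianConstraint, div_pow, div_eq_iff (pow_ne_zero 2 ht), sub_mul,
    div_mul_cancel₀ _ (pow_ne_zero 2 ht)]
  constructor <;> intro h <;> linarith

theorem hasDerivAt_hamiltonianConstraint {k : ℝ} {f : ℝ → ℝ} {a ρ a' : ℝ → ℝ}
    {a'' ρ' t : ℝ} (ha : HasDerivAt a (a' t) t) (ha' : HasDerivAt a' a'' t)
    (hρ : HasDerivAt ρ ρ' t) (hf : DifferentiableAt ℝ f (ρ t)) :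
    HasDerivAt (hamiltonianConstraint k f a ρ a')
      (2 * a' t * a'' - (8 * π / 3) *
        ((1 + deriv f (ρ t)) * ρ' * a t ^ 2 + 2 * (ρ t + f (ρ t)) * a t * a' t)) t := by
  have hρf : HasDerivAt (fun u => ρ u + f (ρ u)) (ρ' + deriv f (ρ t) * ρ') t :=
    hρ.add (hf.hasDerivAt.comp t hρ)
  have h := ((ha'.pow 2).sub ((hρf.const_mul (8 * π / 3)).mul (ha.pow 2))).add_const k
  exact h.congr_deriv (by rw [Pi.pow_apply]; ring)

/-- The derivative of `hamiltonianConstraint` vanishes along the Cardassian evolution. -/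
theorem cardassian_constraint_derivative_eq_zero {A A' A'' R R' P fR df : ℝ} (hA : A ≠ 0)
    (hevol : A'' / A = -(4 * π / 3) * (R + 3 * P) +
      (8 * π / 3) * (fR - (3 / 2) * (R + P) * df))
    (hcons : R' + 3 * (A' / A) * (R + P) = 0) :
    2 * A' * A'' - (8 * π / 3) * ((1 + df) * R' * A ^ 2 + 2 * (R + fR) * A * A') = 0 := by
  rw [div_eq_iff hA] at hevol
  have hcons' : R' * A = -3 * A' * (R + P) := by
    field_simp at hcons
    linarith
  linear_combination 2 * A' * hevol - (8 * π / 3) * (1 + df) * A * hcons'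

/-- propagation of the modified Friedmann constraint
(a'/a)² = (8π/3)(ρ + f(ρ)) - k/a² for isotropic Cardassian models:
if it holds at one time and the evolution and conservation equations hold
on the interval, then it holds at all times. -/
theorem stmt3 (I : Set ℝ) (hI : I.OrdConnected) (k : ℝ)
    (f : ℝ → ℝ) (hf : ContDiff ℝ 1 f)
    (a ρ p a' a'' ρ' : ℝ → ℝ) (t₀ : ℝ) (ht₀ : t₀ ∈ I)
    (ha : ∀ t ∈ I, HasDerivAt a (a' t) t)
    (ha' : ∀ t ∈ I, HasDerivAt a' (a'' t) t)
    (hρ : ∀ t ∈ I, HasDerivAt ρ (ρ' t) t)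
    (hapos : ∀ t ∈ I, 0 < a t)
    (hevol : ∀ t ∈ I, a'' t / a t =
      -(4 * π / 3) * (ρ t + 3 * p t) +
        (8 * π / 3) * (f (ρ t) - (3 / 2) * (ρ t + p t) * deriv f (ρ t)))
    (hcons : ∀ t ∈ I, ρ' t + 3 * (a' t / a t) * (ρ t + p t) = 0)
    (hconstr0 : (a' t₀ / a t₀) ^ 2 = (8 * π / 3) * (ρ t₀ + f (ρ t₀)) - k / a t₀ ^ 2) :
    ∀ t ∈ I, (a' t / a t) ^ 2 = (8 * π / 3) * (ρ t + f (ρ t)) - k / a t ^ 2 := by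
  have hderiv : ∀ t ∈ I, HasDerivAt (hamiltonianConstraint k f a ρ a') 0 t := fun t ht => by
    convert hasDerivAt_hamiltonianConstraint (ha t ht) (ha' t ht) (hρ t ht)
      (hf.differentiable one_ne_zero (ρ t)) using 1
    exact (cardassian_constraint_derivative_eq_zero (hapos t ht).ne' (hevol t ht)
      (hcons t ht)).symm
  have hzero₀ := (friedmann_iff_hamiltonianConstraint_eq_zero (hapos t₀ ht₀).ne').1 hconstr0
  intro t ht
  rw [friedmann_iff_hamiltonianConstraint_eq_zero (hapos t ht).ne',
    hI.apply_eq_of_hasDerivAt_zero hderiv ht₀ ht, hzero₀]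
end

section
/- Let A > 0, B ∈ ℝ, γ ∈ [1,2], n ∈ ℝ, and define V(a) = -(4π/3)(A a^{2-3γ} + B Aⁿ a^{2-3nγ}) on (0,∞). Then V' has a zero in (0,∞) if and only if either (B > 0 and n < 2/(3γ)) or (B < 0 and n > 2/(3γ)), and in that case the zero is unique, given by a* = [B A^{n-1}(2-3nγ)/(3γ-2)]^{1/(3(n-1)γ)}. -/
open Real Set

/-!
Where `V` is given by the formula, `V'(a)` is a nonzero multiple of
`A(2-3γ) a^{1-3γ} + B Aⁿ (2-3nγ) a^{1-3nγ}`. Dividing by the positive factor `a^{1-3nγ}`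
shows that `V'(a) = 0` exactly when `a^{3(n-1)γ} = C`, with `C` the bracket in `a*`.
Since `3(n-1)γ ≠ 0`, the map `a ↦ a^{3(n-1)γ}` is a bijection of `(0,∞)`, so a zero exists
iff `C > 0` (which is the sign condition on `B` and `2 - 3nγ`), and it is then `C^{1/(3(n-1)γ)}`.
-/

namespace Cardassian

lemma mul_rpow_add_mul_rpow_eq_zero_iff {a c : ℝ} (ha : 0 < a) (hc : c ≠ 0) (d p q : ℝ) :
    c * a ^ p + d * a ^ q = 0 ↔ a ^ (p - q) = -d / c := by
  have hfac : c * a ^ p + d * a ^ q = a ^ q * (c * a ^ (p - q) + d) := by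
    rw [mul_add, mul_left_comm, ← rpow_add ha, add_sub_cancel, mul_comm (a ^ q)]
  rw [hfac, mul_eq_zero_iff_left (rpow_pos_of_pos ha q).ne', eq_div_iff hc]
  constructor <;> intro h <;> linarith

lemma exists_pos_rpow_eq_iff {e C : ℝ} (he : e ≠ 0) : (∃ a > 0, a ^ e = C) ↔ 0 < C := by
  constructor
  · rintro ⟨a, ha, rfl⟩
    exact rpow_pos_of_pos ha e
  · intro hC
    exact ⟨C ^ e⁻¹, rpow_pos_of_pos hC _, rpow_inv_rpow hC.le he⟩

lemma deriv_of_eq_const_mul_rpow_add {V : ℝ → ℝ} {c A K p q : ℝ}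
    (hV : ∀ a > 0, V a = c * (A * a ^ p + K * a ^ q)) {a : ℝ} (ha : 0 < a) :
    deriv V a = c * (A * p * a ^ (p - 1) + K * q * a ^ (q - 1)) := by
  have hev : V =ᶠ[nhds a] fun x => c * (A * x ^ p + K * x ^ q) :=
    Filter.eventuallyEq_of_mem (Ioi_mem_nhds ha) hV
  have hp := hasDerivAt_rpow_const (p := p) (Or.inl ha.ne')
  have hq := hasDerivAt_rpow_const (p := q) (Or.inl ha.ne')
  rw [hev.deriv_eq]
  exact (((hp.const_mul A).add (hq.const_mul K)).const_mul c).deriv.trans (by ring)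

lemma deriv_potential_eq_zero_iff {V : ℝ → ℝ} {A B γ n : ℝ} (hA : 0 < A) (hγ : 3 * γ ≠ 2)
    (hV : ∀ a > (0:ℝ), V a =
      -(4 * π / 3) * (A * a ^ (2 - 3 * γ) + B * A ^ n * a ^ (2 - 3 * n * γ)))
    {a : ℝ} (ha : 0 < a) :
    deriv V a = 0 ↔
      a ^ (3 * (n - 1) * γ) = B * A ^ (n - 1) * (2 - 3 * n * γ) / (3 * γ - 2) := by
  have hπ : -(4 * π / 3) ≠ 0 := by have := pi_pos; linarith
  have hc : A * (2 - 3 * γ) ≠ 0 := mul_ne_zero hA.ne' (by contrapose! hγ; linarith)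
  rw [deriv_of_eq_const_mul_rpow_add hV ha, mul_eq_zero_iff_left hπ,
    mul_rpow_add_mul_rpow_eq_zero_iff ha hc, rpow_sub_one hA.ne']
  have hexp : 2 - 3 * γ - 1 - (2 - 3 * n * γ - 1) = 3 * (n - 1) * γ := by ring
  have hsign : (3 * γ - 2) = -(2 - 3 * γ) := by ring
  rw [hexp, hsign]
  field_simp

lemma critical_value_pos_iff {A B γ n : ℝ} (hA : 0 < A) (hγ : 2 < 3 * γ) :
    0 < B * A ^ (n - 1) * (2 - 3 * n * γ) / (3 * γ - 2) ↔
      (0 < B ∧ n < 2 / (3 * γ)) ∨ (B < 0 ∧ 2 / (3 * γ) < n) := by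
  rw [div_pos_iff_of_pos_right (by linarith), mul_right_comm,
    mul_pos_iff_of_pos_right (rpow_pos_of_pos hA _), mul_pos_iff, sub_pos, sub_neg,
    lt_div_iff₀ (by linarith), div_lt_iff₀ (by linarith), mul_comm n (3 * γ), mul_right_comm 3 n γ]

end Cardassian

open Cardassian in
theorem stmt4_general (A B γ n : ℝ) (hA : 0 < A) (hγ : γ ∈ Set.Icc (1:ℝ) 2)
    (hn1 : n ≠ 1)
    (V : ℝ → ℝ)
    (hV : ∀ a > (0:ℝ), V a =
      -(4 * π / 3) * (A * a ^ (2 - 3 * γ) + B * A ^ n * a ^ (2 - 3 * n * γ))) :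
    ((∃ a > (0:ℝ), deriv V a = 0) ↔
      (0 < B ∧ n < 2 / (3 * γ)) ∨ (B < 0 ∧ 2 / (3 * γ) < n)) ∧
    (∀ a > (0:ℝ), deriv V a = 0 →
      a = (B * A ^ (n - 1) * (2 - 3 * n * γ) / (3 * γ - 2)) ^ (1 / (3 * (n - 1) * γ))) := by
  have h3γ : 2 < 3 * γ := by linarith [hγ.1]
  have he : 3 * (n - 1) * γ ≠ 0 := by
    have hγ0 : γ ≠ 0 := by linarith
    exact mul_ne_zero (mul_ne_zero three_ne_zero (sub_ne_zero.mpr hn1)) hγ0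
  have key a (ha : 0 < a) := deriv_potential_eq_zero_iff hA h3γ.ne' hV ha
  refine ⟨?_, fun a ha h => ?_⟩
  · rw [← critical_value_pos_iff hA h3γ, ← exists_pos_rpow_eq_iff he]
    exact ⟨fun ⟨a, ha, h⟩ => ⟨a, ha, (key a ha).1 h⟩, fun ⟨a, ha, h⟩ => ⟨a, ha, (key a ha).2 h⟩⟩
  · rw [← (key a ha).1 h, one_div, rpow_rpow_inv ha.le he]

/-- the Cardassian effective potential
V(a) = -(4π/3)(A a^{2-3γ} + B Aⁿ a^{2-3nγ}) has a zero of V' in (0,∞)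
iff (B>0 and n<2/(3γ)) or (B<0 and n>2/(3γ)), and then the zero is unique,
given by a* = [B A^{n-1}(2-3nγ)/(3γ-2)]^{1/(3(n-1)γ)}. -/
theorem stmt4 (A B γ n : ℝ) (hA : 0 < A) (hγ : γ ∈ Set.Icc (1:ℝ) 2)
    (hn0 : n ≠ 0) (hn1 : n ≠ 1) (hn2 : n ≠ 2 / (3 * γ))
    (V : ℝ → ℝ)
    (hV : ∀ a > (0:ℝ), V a =
      -(4 * π / 3) * (A * a ^ (2 - 3 * γ) + B * A ^ n * a ^ (2 - 3 * n * γ))) :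
    ((∃ a > (0:ℝ), deriv V a = 0) ↔
      (0 < B ∧ n < 2 / (3 * γ)) ∨ (B < 0 ∧ 2 / (3 * γ) < n)) ∧
    (∀ a > (0:ℝ), deriv V a = 0 →
      a = (B * A ^ (n - 1) * (2 - 3 * n * γ) / (3 * γ - 2)) ^ (1 / (3 * (n - 1) * γ))) :=
  stmt4_general A B γ n hA hγ hn1 V hV
end

section
/- Let A > 0, γ ∈ [1,2], n ∉ {0, 1, 2/(3γ)}, and suppose B and n are such that V(a) = -(4π/3)(A a^{2-3γ} + B Aⁿ a^{2-3nγ}) has a critical point a* ∈ (0,∞) (i.e. B>0, n<2/(3γ) or B<0, n>2/(3γ)). Then V''(a*) > 0 if n > 1 (local minimum) and V''(a*) < 0 if n < 1 (local maximum). -/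
open Real Set

/-!
Write `V a = c₁ a^p + c₂ a^q`. Differentiating twice and eliminating `c₂ q a^(q-2)` with the
critical-point equation `c₁ p a^(p-1) + c₂ q a^(q-1) = 0` leaves `V''(a*) = c₁ p (p - q) a*^(p-2)`.
For the Cardassian potential `c₁ p = (4π/3) A (3γ - 2) > 0` and `p - q = 3γ(n - 1)`,
so the sign of `V''(a*)` is the sign of `n - 1`.
-/

section TwoTermPower

variable {c₁ c₂ p q x : ℝ}

theorem hasDerivAt_mul_rpow_add_mul_rpow (hx : x ≠ 0) :
    HasDerivAt (fun a : ℝ => c₁ * a ^ p + c₂ * a ^ q)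
      (c₁ * p * x ^ (p - 1) + c₂ * q * x ^ (q - 1)) x :=
  (((hasDerivAt_rpow_const (Or.inl hx)).const_mul c₁).add
    ((hasDerivAt_rpow_const (Or.inl hx)).const_mul c₂)).congr_deriv (by ring)

theorem deriv_deriv_of_eq_mul_rpow_add_mul_rpow {f : ℝ → ℝ}
    (hf : ∀ a > 0, f a = c₁ * a ^ p + c₂ * a ^ q) (hx : 0 < x) :
    deriv (deriv f) x = c₁ * p * (p - 1) * x ^ (p - 2) + c₂ * q * (q - 1) * x ^ (q - 2) := by
  have hf' : deriv f =ᶠ[nhds x] fun a => c₁ * p * a ^ (p - 1) + c₂ * q * a ^ (q - 1) := by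
    filter_upwards [Ioi_mem_nhds hx] with a (ha : 0 < a)
    have hfa : f =ᶠ[nhds a] fun a => c₁ * a ^ p + c₂ * a ^ q :=
      Filter.eventuallyEq_of_mem (Ioi_mem_nhds ha) hf
    rw [hfa.deriv_eq, (hasDerivAt_mul_rpow_add_mul_rpow ha.ne').deriv]
  have h2 : ∀ r : ℝ, r - 1 - 1 = r - 2 := fun r => by ring
  rw [hf'.deriv_eq, (hasDerivAt_mul_rpow_add_mul_rpow hx.ne').deriv, h2, h2]

theorem mul_rpow_add_mul_rpow_critical (hK : 0 < -(c₂ * q) / (c₁ * p)) (hpq : p ≠ q)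
    (hx : x = (-(c₂ * q) / (c₁ * p)) ^ (1 / (p - q))) :
    c₁ * p * x ^ (p - 1) + c₂ * q * x ^ (q - 1) = 0 := by
  have hxpos : 0 < x := hx ▸ rpow_pos_of_pos hK _
  have hc : c₁ * p ≠ 0 := fun h => by simp [h] at hK
  have hxK : x ^ (p - q) = -(c₂ * q) / (c₁ * p) := by
    rw [hx, ← rpow_mul hK.le, one_div_mul_cancel (sub_ne_zero.mpr hpq), rpow_one]
  have hsplit : x ^ (p - 1) = x ^ (q - 1) * x ^ (p - q) := by
    rw [← rpow_add hxpos]; ring_nf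
  rw [hsplit, hxK, mul_comm (x ^ (q - 1)), ← mul_assoc, mul_div_cancel₀ _ hc]
  ring

theorem mul_rpow_add_mul_rpow_second_deriv_of_critical (hx : 0 < x)
    (hcrit : c₁ * p * x ^ (p - 1) + c₂ * q * x ^ (q - 1) = 0) :
    c₁ * p * (p - 1) * x ^ (p - 2) + c₂ * q * (q - 1) * x ^ (q - 2)
      = c₁ * p * (p - q) * x ^ (p - 2) := by
  have hshift : ∀ r : ℝ, x ^ (r - 1) = x ^ (r - 2) * x := fun r => by
    rw [← rpow_add_one hx.ne']; ring_nf
  rw [hshift, hshift] at hcrit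
  have hcrit' : c₁ * p * x ^ (p - 2) + c₂ * q * x ^ (q - 2) = 0 := by
    apply mul_right_cancel₀ hx.ne'
    linear_combination hcrit
  linear_combination (q - 1) * hcrit'

end TwoTermPower

section Cardassian

variable {A B γ n : ℝ}

theorem cardassian_critical_base_pos (hA : 0 < A) (hγ : 1 ≤ γ)
    (hcrit : (0 < B ∧ n < 2 / (3 * γ)) ∨ (B < 0 ∧ 2 / (3 * γ) < n)) :
    0 < B * A ^ (n - 1) * (2 - 3 * n * γ) / (3 * γ - 2) := by
  have hγ0 : 0 < 3 * γ := by linarith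
  have hBq : 0 < B * (2 - 3 * n * γ) := by
    rcases hcrit with ⟨hB, hn⟩ | ⟨hB, hn⟩
    · rw [lt_div_iff₀ hγ0] at hn
      exact mul_pos hB (by linarith)
    · rw [div_lt_iff₀ hγ0] at hn
      exact mul_pos_of_neg_of_neg hB (by linarith)
  rw [mul_right_comm]
  exact div_pos (mul_pos hBq (rpow_pos_of_pos hA _)) (by linarith)

theorem cardassian_critical_base_eq (hA : 0 < A) (hγ : 3 * γ ≠ 2) :
    -(-(4 * π / 3) * (B * A ^ n) * (2 - 3 * n * γ)) / (-(4 * π / 3) * A * (2 - 3 * γ))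
      = B * A ^ (n - 1) * (2 - 3 * n * γ) / (3 * γ - 2) := by
  have : 2 - 3 * γ ≠ 0 := fun h => hγ (by linarith)
  have : 3 * γ - 2 ≠ 0 := sub_ne_zero.mpr hγ
  rw [rpow_sub_one hA.ne']
  field_simp
  ring

end Cardassian

theorem stmt5_general (A B γ n : ℝ) (hA : 0 < A) (hγ : γ ∈ Set.Icc (1:ℝ) 2)
    (hn1 : n ≠ 1)
    (hcrit : (0 < B ∧ n < 2 / (3 * γ)) ∨ (B < 0 ∧ 2 / (3 * γ) < n))
    (V : ℝ → ℝ)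
    (hV : ∀ a > (0:ℝ), V a =
      -(4 * π / 3) * (A * a ^ (2 - 3 * γ) + B * A ^ n * a ^ (2 - 3 * n * γ)))
    (astar : ℝ)
    (hastar : astar =
      (B * A ^ (n - 1) * (2 - 3 * n * γ) / (3 * γ - 2)) ^ (1 / (3 * (n - 1) * γ))) :
    (1 < n → 0 < deriv (deriv V) astar) ∧ (n < 1 → deriv (deriv V) astar < 0) := by
  have hγ1 := hγ.1
  have hK := cardassian_critical_base_eq (B := B) (n := n) hA (by linarith)
  have hKpos := cardassian_critical_base_pos hA hγ1 hcrit
  have ha : 0 < astar := hastar ▸ rpow_pos_of_pos hKpos _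
  have hpq : 2 - 3 * γ ≠ 2 - 3 * n * γ := fun h =>
    hn1 (mul_left_cancel₀ (by linarith : 3 * γ ≠ 0) (by linarith))
  have hcritpt := mul_rpow_add_mul_rpow_critical (x := astar) (hK ▸ hKpos) hpq
    (by rw [hastar, hK]; congr 2; ring)
  have hV' : ∀ a > 0, V a = -(4 * π / 3) * A * a ^ (2 - 3 * γ)
      + -(4 * π / 3) * (B * A ^ n) * a ^ (2 - 3 * n * γ) := fun a ha => by
    rw [hV a ha]; ring
  have hcoef : 0 < 4 * π / 3 * A * (3 * γ - 2) * (3 * γ) * astar ^ (2 - 3 * γ - 2) := by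
    have := rpow_pos_of_pos ha (2 - 3 * γ - 2)
    have : 0 < γ := by linarith
    have : 0 < 3 * γ - 2 := by linarith
    positivity
  have hV'' : deriv (deriv V) astar
      = 4 * π / 3 * A * (3 * γ - 2) * (3 * γ) * astar ^ (2 - 3 * γ - 2) * (n - 1) := by
    rw [deriv_deriv_of_eq_mul_rpow_add_mul_rpow hV' ha,
      mul_rpow_add_mul_rpow_second_deriv_of_critical ha hcritpt]
    ring
  rw [hV'']
  exact ⟨fun hn => mul_pos hcoef (by linarith), fun hn => mul_neg_of_pos_of_neg hcoef (by linarith)⟩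

/-- at the unique critical point a* of the Cardassian effective
potential V, one has V''(a*) > 0 if n > 1 (local minimum) and V''(a*) < 0 if
n < 1 (local maximum). -/
theorem stmt5 (A B γ n : ℝ) (hA : 0 < A) (hγ : γ ∈ Set.Icc (1:ℝ) 2)
    (hn0 : n ≠ 0) (hn1 : n ≠ 1) (hn2 : n ≠ 2 / (3 * γ))
    (hcrit : (0 < B ∧ n < 2 / (3 * γ)) ∨ (B < 0 ∧ 2 / (3 * γ) < n))
    (V : ℝ → ℝ)
    (hV : ∀ a > (0:ℝ), V a =
      -(4 * π / 3) * (A * a ^ (2 - 3 * γ) + B * A ^ n * a ^ (2 - 3 * n * γ)))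
    (astar : ℝ)
    (hastar : astar =
      (B * A ^ (n - 1) * (2 - 3 * n * γ) / (3 * γ - 2)) ^ (1 / (3 * (n - 1) * γ))) :
    (1 < n → 0 < deriv (deriv V) astar) ∧ (n < 1 → deriv (deriv V) astar < 0) :=
  stmt5_general A B γ n hA hγ hn1 hcrit V hV astar hastar
end

section
/- Let V(a) = -(4π/3)(A a^{2-3γ} + B Aⁿ a^{2-3nγ}) with A > 0, B < 0, n > 1, γ ∈ [1,2], and let a* be the unique critical point of V. Then V(a) → ∞ as a → 0⁺ and V(a) → 0⁻ as a → ∞, V is decreasing on (0,a*) and increasing on (a*,∞); consequently for every E > V(a*) with E < 0 the sublevel set {a > 0 : V(a) < E} is a bounded interval with compact closure in (0,∞). -/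
open Real Set Filter Topology

/-!
The potential is `u a^p + v a^q` with `p = 2 - 3γ`, `q = 2 - 3nγ` (so `q < p < 0`) and
`u < 0 < v`. Writing it as `a^q (u a^(p-q) + v)` gives both limits, and its derivative
`a^(q-1) (u p a^(p-q) + v q)` changes sign exactly once, where `a^(p-q) = -vq/(up)`, which is
`a*`. For `E < 0` the sublevel set therefore stays away from `0` (where `V → ∞`) and from `∞`
(where `V → 0`), and it is an interval because `V` is unimodal.
-/

section TwoTermPowerLaw

variable {u v p q : ℝ}

lemma rpow_two_term_eq_mul {a : ℝ} (ha : 0 < a) :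
    u * a ^ p + v * a ^ q = a ^ q * (u * a ^ (p - q) + v) := by
  have hsplit : a ^ p = a ^ q * a ^ (p - q) := by rw [← rpow_add ha, add_sub_cancel]
  rw [hsplit]
  ring

lemma hasDerivAt_rpow_two_term {a : ℝ} (ha : 0 < a) :
    HasDerivAt (fun x => u * x ^ p + v * x ^ q)
      (a ^ (q - 1) * (u * p * a ^ (p - q) + v * q)) a := by
  have hp := (hasDerivAt_rpow_const (p := p) (Or.inl ha.ne')).const_mul u
  have hq := (hasDerivAt_rpow_const (p := q) (Or.inl ha.ne')).const_mul v
  refine (hp.add hq).congr_deriv ?_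
  rw [show p - 1 = (q - 1) + (p - q) by ring, rpow_add ha]
  ring

lemma strictMonoOn_rpow_two_term_deriv_factor (hup : 0 < u * p) (hpq : q < p) :
    StrictMonoOn (fun a => u * p * a ^ (p - q) + v * q) (Ici 0) := fun _ ha _ _ hab =>
  add_lt_add_left (mul_lt_mul_of_pos_left (rpow_lt_rpow ha hab (sub_pos.2 hpq)) hup) _

lemma strictAntiOn_rpow_two_term (hup : 0 < u * p) (hpq : q < p) {c : ℝ} (hc : 0 < c)
    (hcrit : u * p * c ^ (p - q) + v * q = 0) :
    StrictAntiOn (fun x => u * x ^ p + v * x ^ q) (Ioc 0 c) := by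
  refine strictAntiOn_of_deriv_neg (convex_Ioc 0 c)
    (fun x hx => (hasDerivAt_rpow_two_term hx.1).continuousAt.continuousWithinAt) fun x hx => ?_
  rw [interior_Ioc] at hx
  rw [(hasDerivAt_rpow_two_term hx.1).deriv]
  refine mul_neg_of_pos_of_neg (rpow_pos_of_pos hx.1 _) ?_
  rw [← hcrit]
  exact strictMonoOn_rpow_two_term_deriv_factor hup hpq hx.1.le hc.le hx.2

lemma strictMonoOn_rpow_two_term (hup : 0 < u * p) (hpq : q < p) {c : ℝ} (hc : 0 < c)
    (hcrit : u * p * c ^ (p - q) + v * q = 0) :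
    StrictMonoOn (fun x => u * x ^ p + v * x ^ q) (Ici c) := by
  refine strictMonoOn_of_deriv_pos (convex_Ici c)
    (fun x hx => (hasDerivAt_rpow_two_term (hc.trans_le hx)).continuousAt.continuousWithinAt)
    fun x hx => ?_
  rw [interior_Ici] at hx
  rw [(hasDerivAt_rpow_two_term (hc.trans hx)).deriv]
  refine mul_pos (rpow_pos_of_pos (hc.trans hx) _) ?_
  rw [← hcrit]
  exact strictMonoOn_rpow_two_term_deriv_factor hup hpq hc.le (hc.trans hx).le hx

lemma tendsto_rpow_two_term_nhdsGT_zero (hv : 0 < v) (hq : q < 0) (hpq : q < p) :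
    Tendsto (fun x => u * x ^ p + v * x ^ q) (𝓝[>] 0) atTop := by
  have hpow : Tendsto (fun x : ℝ => x ^ (p - q)) (𝓝[>] 0) (𝓝 0) := by
    simpa [zero_rpow (sub_pos.2 hpq).ne'] using
      ((continuousAt_rpow_const 0 (p - q) (Or.inr (sub_pos.2 hpq).le)).tendsto).mono_left
        nhdsWithin_le_nhds
  have hbracket : Tendsto (fun x : ℝ => u * x ^ (p - q) + v) (𝓝[>] 0) (𝓝 v) := by
    simpa using (hpow.const_mul u).add_const v
  refine ((tendsto_rpow_neg_nhdsGT_zero hq).atTop_mul_pos hv hbracket).congr' ?_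
  filter_upwards [self_mem_nhdsWithin] with a ha
  exact (rpow_two_term_eq_mul ha).symm

lemma tendsto_rpow_two_term_atTop (hu : u < 0) (hp : p < 0) (hpq : q < p) :
    Tendsto (fun x => u * x ^ p + v * x ^ q) atTop (𝓝[<] 0) := by
  refine tendsto_nhdsWithin_iff.2 ⟨?_, ?_⟩
  · have hp' := tendsto_rpow_neg_atTop (neg_pos.2 hp)
    have hq' := tendsto_rpow_neg_atTop (neg_pos.2 (hpq.trans hp))
    simp only [neg_neg] at hp' hq'
    simpa using (hp'.const_mul u).add (hq'.const_mul v)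
  · filter_upwards [(tendsto_rpow_atTop (sub_pos.2 hpq)).eventually_gt_atTop (v / -u),
      eventually_gt_atTop 0] with a hlarge ha
    rw [mem_Iio, rpow_two_term_eq_mul ha]
    refine mul_neg_of_pos_of_neg (rpow_pos_of_pos ha _) ?_
    rw [div_lt_iff₀ (neg_pos.2 hu)] at hlarge
    linarith

end TwoTermPowerLaw

lemma ordConnected_sublevel_of_antitoneOn_of_monotoneOn {α β : Type*} [LinearOrder α]
    [Preorder β] {s : Set α} {V : α → β} {c : α} {E : β} (hs : s.OrdConnected)
    (hanti : AntitoneOn V (s ∩ Iic c)) (hmono : MonotoneOn V (s ∩ Ici c)) :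
    {a | a ∈ s ∧ V a < E}.OrdConnected := by
  refine ⟨fun x hx y hy z hz => ⟨hs.out hx.1 hy.1 hz, ?_⟩⟩
  have hzs := hs.out hx.1 hy.1 hz
  rcases le_total z c with hzc | hcz
  · exact (hanti ⟨hx.1, hz.1.trans hzc⟩ ⟨hzs, hzc⟩ hz.1).trans_lt hx.2
  · exact (hmono ⟨hzs, hcz⟩ ⟨hy.1, hcz.trans hz.2⟩ hz.2).trans_lt hy.2

lemma exists_sublevel_subset_Icc_of_tendsto {V : ℝ → ℝ} {L E : ℝ}
    (h0 : Tendsto V (𝓝[>] 0) atTop) (htop : Tendsto V atTop (𝓝 L)) (hE : E < L) :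
    ∃ ε M : ℝ, 0 < ε ∧ {a | 0 < a ∧ V a < E} ⊆ Icc ε M := by
  obtain ⟨ε, hε, hsmall⟩ := mem_nhdsGT_iff_exists_Ioo_subset.1 (h0.eventually_gt_atTop E)
  obtain ⟨M, hlarge⟩ := eventually_atTop.1 (htop.eventually (eventually_gt_nhds hE))
  refine ⟨ε, M, hε, fun a ⟨ha, hVa⟩ => ⟨?_, ?_⟩⟩
  · exact not_lt.1 fun haε => (hsmall ⟨ha, haε⟩ : E < V a).not_gt hVa
  · exact not_lt.1 fun hMa => (hlarge a hMa.le).not_gt hVa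

lemma sublevel_isBounded_ordConnected_isCompact_closure {V : ℝ → ℝ} {c L E : ℝ}
    (h0 : Tendsto V (𝓝[>] 0) atTop) (htop : Tendsto V atTop (𝓝 L)) (hE : E < L)
    (hanti : AntitoneOn V (Ioc 0 c)) (hmono : MonotoneOn V (Ici c)) :
    Bornology.IsBounded {a | 0 < a ∧ V a < E} ∧ {a | 0 < a ∧ V a < E}.OrdConnected ∧
      IsCompact (closure {a | 0 < a ∧ V a < E}) ∧ closure {a | 0 < a ∧ V a < E} ⊆ Ioi 0 := by
  obtain ⟨ε, M, hε, hsub⟩ := exists_sublevel_subset_Icc_of_tendsto h0 htop hE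
  have hcl := closure_minimal hsub isClosed_Icc
  exact ⟨(Metric.isBounded_Icc ε M).subset hsub,
    ordConnected_sublevel_of_antitoneOn_of_monotoneOn ordConnected_Ioi hanti
      (hmono.mono inter_subset_right),
    isCompact_Icc.of_isClosed_subset isClosed_closure hcl,
    hcl.trans fun _ ha => hε.trans_le ha.1⟩

lemma cardassian_critical_point {A B γ n c : ℝ} (hA : 0 < A) (hB : B < 0) (hn : 1 < n)
    (hγ : 1 ≤ γ)
    (hc : c = (B * A ^ (n - 1) * (2 - 3 * n * γ) / (3 * γ - 2)) ^ (1 / (3 * (n - 1) * γ))) :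
    0 < c ∧ A * (2 - 3 * γ) * c ^ (3 * (n - 1) * γ) + B * A ^ n * (2 - 3 * n * γ) = 0 := by
  have hK : 0 < B * A ^ (n - 1) * (2 - 3 * n * γ) / (3 * γ - 2) :=
    div_pos (mul_pos_of_neg_of_neg (mul_neg_of_neg_of_pos hB (rpow_pos_of_pos hA (n - 1)))
      (by nlinarith)) (by linarith)
  have hAn : A ^ n = A * A ^ (n - 1) := by
    rw [← rpow_one_add' hA.le (by linarith), add_sub_cancel]
  refine ⟨hc ▸ rpow_pos_of_pos hK _, ?_⟩
  rw [hc, ← rpow_mul hK.le, one_div_mul_cancel (by nlinarith), rpow_one, hAn]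
  field_simp [show 3 * γ - 2 ≠ 0 by linarith]
  ring

/-- for B < 0, n > 1 the potential V tends to +∞ as a → 0⁺ and to
0 from below as a → ∞, is decreasing on (0,a*) and increasing on (a*,∞); for
every energy level E with V(a*) < E < 0 the sublevel set {a > 0 : V(a) < E} is
a bounded interval with compact closure contained in (0,∞). -/
theorem stmt6 (A B γ n : ℝ) (hA : 0 < A) (hB : B < 0) (hn : 1 < n)
    (hγ : γ ∈ Set.Icc (1:ℝ) 2)
    (V : ℝ → ℝ)
    (hV : ∀ a > (0:ℝ), V a =
      -(4 * π / 3) * (A * a ^ (2 - 3 * γ) + B * A ^ n * a ^ (2 - 3 * n * γ)))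
    (astar : ℝ)
    (hastar : astar =
      (B * A ^ (n - 1) * (2 - 3 * n * γ) / (3 * γ - 2)) ^ (1 / (3 * (n - 1) * γ))) :
    Tendsto V (nhdsWithin 0 (Set.Ioi 0)) atTop ∧
    Tendsto V atTop (nhdsWithin 0 (Set.Iio 0)) ∧
    StrictAntiOn V (Set.Ioc 0 astar) ∧
    StrictMonoOn V (Set.Ici astar) ∧
    ∀ E : ℝ, V astar < E → E < 0 →
      Bornology.IsBounded {a : ℝ | 0 < a ∧ V a < E} ∧
      {a : ℝ | 0 < a ∧ V a < E}.OrdConnected ∧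
      IsCompact (closure {a : ℝ | 0 < a ∧ V a < E}) ∧
      closure {a : ℝ | 0 < a ∧ V a < E} ⊆ Set.Ioi 0 := by
  obtain ⟨hγ, -⟩ := hγ
  set p := 2 - 3 * γ
  set q := 2 - 3 * n * γ
  set u := -(4 * π / 3) * A
  set v := -(4 * π / 3) * (B * A ^ n)
  have hp : p < 0 := by linarith
  have hpq : q < p := by nlinarith
  have hu : u < 0 := mul_neg_of_neg_of_pos (by linarith [pi_pos]) hA
  have hv : 0 < v :=
    mul_pos_of_neg_of_neg (by linarith [pi_pos]) (mul_neg_of_neg_of_pos hB (rpow_pos_of_pos hA n))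
  have hVeq : EqOn V (fun x => u * x ^ p + v * x ^ q) (Ioi 0) := fun a ha => by
    rw [hV a ha]; ring
  obtain ⟨hastar_pos, hcrit⟩ := cardassian_critical_point hA hB hn hγ hastar
  replace hcrit : u * p * astar ^ (p - q) + v * q = 0 := by
    rw [show p - q = 3 * (n - 1) * γ by ring]
    linear_combination (-(4 * π / 3)) * hcrit
  have h0 : Tendsto V (𝓝[>] 0) atTop :=
    (tendsto_rpow_two_term_nhdsGT_zero hv (hpq.trans hp) hpq).congr'
      (eventuallyEq_nhdsWithin_of_eqOn hVeq).symm
  have htop : Tendsto V atTop (𝓝[<] 0) :=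
    (tendsto_rpow_two_term_atTop hu hp hpq).congr'
      (eventually_gt_atTop 0 |>.mono fun a ha => (hVeq ha).symm)
  have hup : 0 < u * p := mul_pos_of_neg_of_neg hu hp
  have hanti : StrictAntiOn V (Ioc 0 astar) :=
    (strictAntiOn_rpow_two_term hup hpq hastar_pos hcrit).congr
      (hVeq.mono Ioc_subset_Ioi_self).symm
  have hmono : StrictMonoOn V (Ici astar) :=
    (strictMonoOn_rpow_two_term hup hpq hastar_pos hcrit).congr
      (hVeq.mono (Ici_subset_Ioi.2 hastar_pos)).symm
  exact ⟨h0, htop, hanti, hmono, fun E _ hE =>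
    sublevel_isBounded_ordConnected_isCompact_closure h0 (htop.mono_right nhdsWithin_le_nhds) hE
      hanti.antitoneOn hmono.monotoneOn⟩
end

section
/- Let C > 0, p ≥ 1/2, and let a: (t₀, t₁) → (0,∞) be C¹ with a(t) → 0 as t → t₀⁺ and a'(t) = C a(t)^{-p} (1 + o(1)) as t → t₀⁺. Then a(t) = (C(p+1))^{1/(p+1)} (t-t₀)^{1/(p+1)} (1 + o(1)) as t → t₀⁺. -/
open Real Set Filter Topology

/-! With `b = a ^ (p + 1)` the equation `a' = C a^{-p} (1 + ε)` becomes `b' = C (p + 1) (1 + ε)`.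
Since `b → 0` at `t₀⁺`, l'Hôpital's rule gives `b t / (C (p + 1) (t - t₀)) → 1`, and taking
`(p + 1)`-th roots recovers `a`. -/

theorem HasDerivAt.rpow_add_one_of_rpow_neg {f : ℝ → ℝ} {x C e p : ℝ}
    (hf : HasDerivAt f (C * f x ^ (-p) * e) x) (hx : 0 < f x) :
    HasDerivAt (fun y => f y ^ (p + 1)) (C * (p + 1) * e) x := by
  convert hf.rpow_const (p := p + 1) (Or.inl hx.ne') using 1
  have hcancel : f x ^ (-p) * f x ^ (p + 1 - 1) = 1 := by
    rw [← rpow_add hx]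
    simp
  linear_combination (-(C * e * (p + 1))) * hcancel

theorem tendsto_div_sub_nhdsGT_of_hasDerivAt {f f' : ℝ → ℝ} {x₀ x₁ : ℝ} {l : Filter ℝ}
    (hx : x₀ < x₁) (hf : ∀ x ∈ Ioo x₀ x₁, HasDerivAt f (f' x) x)
    (hf₀ : Tendsto f (𝓝[>] x₀) (𝓝 0)) (hf' : Tendsto f' (𝓝[>] x₀) l) :
    Tendsto (fun x => f x / (x - x₀)) (𝓝[>] x₀) l := by
  refine HasDerivAt.lhopital_zero_right_on_Ioo hx hf
    (fun x _ => (hasDerivAt_id x).sub_const x₀) (fun _ _ => one_ne_zero) hf₀ ?_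
    (by simpa only [div_one] using hf')
  exact ((continuous_sub_right x₀).tendsto' x₀ 0 (sub_self x₀)).mono_left nhdsWithin_le_nhds

theorem rpow_one_div_mul_rpow_div_rpow_one_div {x y q : ℝ} (hx : 0 ≤ x) (hy : 0 < y) (hq : q ≠ 0) :
    y ^ (1 / q) * (x ^ q / y) ^ (1 / q) = x := by
  rw [div_rpow (rpow_nonneg hx q) hy.le, one_div, rpow_rpow_inv hx hq,
    mul_div_cancel₀ _ (rpow_pos_of_pos hy _).ne']

/-- if a → 0 as t → t₀⁺ and a' = C a^{-p}(1+o(1)) with C > 0,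
p ≥ 1/2, then a(t) = (C(p+1))^{1/(p+1)} (t-t₀)^{1/(p+1)} (1+o(1)) as t → t₀⁺. -/
theorem stmt11 (C p t₀ t₁ : ℝ) (hC : 0 < C) (hp : 1 / 2 ≤ p) (ht : t₀ < t₁)
    (a a' ε : ℝ → ℝ)
    (ha : ∀ t ∈ Set.Ioo t₀ t₁, HasDerivAt a (a' t) t)
    (hapos : ∀ t ∈ Set.Ioo t₀ t₁, 0 < a t)
    (hlim : Tendsto a (nhdsWithin t₀ (Set.Ioi t₀)) (nhds 0))
    (heq : ∀ t ∈ Set.Ioo t₀ t₁, a' t = C * a t ^ (-p) * (1 + ε t))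
    (hε : Tendsto ε (nhdsWithin t₀ (Set.Ioi t₀)) (nhds 0)) :
    ∃ δ : ℝ → ℝ, Tendsto δ (nhdsWithin t₀ (Set.Ioi t₀)) (nhds 0) ∧
      ∀ t ∈ Set.Ioo t₀ t₁,
        a t = (C * (p + 1)) ^ (1 / (p + 1)) * (t - t₀) ^ (1 / (p + 1)) * (1 + δ t) := by
  have hp1 : 0 < p + 1 := by linarith
  set K := C * (p + 1)
  have hK : 0 < K := mul_pos hC hp1
  have hb' : ∀ t ∈ Ioo t₀ t₁, HasDerivAt (fun t => a t ^ (p + 1)) (K * (1 + ε t)) t :=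
    fun t ht => (heq t ht ▸ ha t ht).rpow_add_one_of_rpow_neg (hapos t ht)
  have hb₀ : Tendsto (fun t => a t ^ (p + 1)) (𝓝[>] t₀) (𝓝 0) := by
    simpa [zero_rpow hp1.ne'] using hlim.rpow_const (p := p + 1) (Or.inr hp1.le)
  have hratio : Tendsto (fun t => a t ^ (p + 1) / (t - t₀) / K) (𝓝[>] t₀) (𝓝 1) := by
    have := tendsto_div_sub_nhdsGT_of_hasDerivAt ht hb' hb₀
      (by simpa using (hε.const_add 1).const_mul K)
    simpa [hK.ne'] using this.div_const K
  refine ⟨fun t => (a t ^ (p + 1) / (t - t₀) / K) ^ (1 / (p + 1)) - 1, ?_, fun t ht => ?_⟩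
  · simpa using (hratio.rpow_const (p := 1 / (p + 1)) (Or.inl one_ne_zero)).sub_const 1
  · have htt₀ : 0 < t - t₀ := sub_pos.2 ht.1
    rw [add_sub_cancel, ← mul_rpow hK.le htt₀.le, div_div, mul_comm (t - t₀)]
    exact (rpow_one_div_mul_rpow_div_rpow_one_div (hapos t ht).le (mul_pos hK htt₀) hp1.ne').symm
end
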